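/- arXiv:2401.16302 — 3 statements merged into one kernel-verified Lean document; each statement's English description precedes it below -/
import Mathlib

section
/- Let A be the 3×3 real matrix [[1,1,0],[0,0,1],[1,0,0]] (the adjacency matrix of the error-generating state diagram). Then the characteristic polynomial of A is X³ − X² − 1; this polynomial has exactly one real root λ, this root satisfies 1 < λ < 2, and log₂ λ lies strictly between 0.54 and 0.56 (the paper's value log₂(λ_max) ≈ 0.55). -/
/-!
The characteristic polynomial is a direct `3 × 3` determinant expansion. Writing
`f x = x ^ 3 - x ^ 2 - 1 = x ^ 2 (x - 1) - 1`, every real root exceeds `1`, and on `[1, ∞)`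
the map `x ↦ x ^ 2 (x - 1)` is strictly increasing, so `f` has at most one real root;
the intermediate value theorem places one in `(1.46, 1.47)`. The bounds on `log₂ λ` then
reduce to the integer-power comparisons `2 ^ 27 < 1.46 ^ 50` and `1.47 ^ 50 < 2 ^ 28`.
-/

open Polynomial in
theorem charpoly_errorStateMatrix (R : Type*) [CommRing R] :
    (!![1, 1, 0; 0, 0, 1; 1, 0, 0] : Matrix (Fin 3) (Fin 3) R).charpoly = X ^ 3 - X ^ 2 - 1 := by
  rw [Matrix.charpoly, Matrix.det_fin_three]
  simp only [Fin.isValue, Matrix.charmatrix_apply_eq, Matrix.of_apply, Matrix.cons_val',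
    Matrix.cons_val_zero, Matrix.cons_val_fin_one, map_one, Matrix.cons_val_one, map_zero, sub_zero,
    Matrix.cons_val, ne_eq, Fin.reduceEq, not_false_eq_true, Matrix.charmatrix_apply_ne, mul_neg,
    mul_one, neg_sub, neg_zero, mul_zero, zero_ne_one, one_ne_zero, zero_mul, neg_neg, add_zero]
  ring

theorem one_lt_of_cube_sub_sq_sub_one_eq_zero {x : ℝ} (hx : x ^ 3 - x ^ 2 - 1 = 0) : 1 < x := by
  by_contra! h
  nlinarith [sq_nonneg x]

theorem strictMonoOn_cube_sub_sq : StrictMonoOn (fun x : ℝ => x ^ 3 - x ^ 2) (Set.Ici 1) := by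
  intro a (ha : 1 ≤ a) b (hb : 1 ≤ b) hab
  have hba : 0 < b - a := sub_pos.mpr hab
  -- `b³ - b² - (a³ - a²) = (b - a) (a (a - 1) + b (b - 1) + a b)`
  nlinarith [mul_pos hba (mul_pos (one_pos.trans_le ha) (one_pos.trans_le hb)),
    mul_nonneg hba.le (mul_nonneg (zero_le_one.trans ha) (sub_nonneg.mpr ha)),
    mul_nonneg hba.le (mul_nonneg (zero_le_one.trans hb) (sub_nonneg.mpr hb))]

theorem eq_of_cube_sub_sq_sub_one_eq_zero {x y : ℝ} (hx : x ^ 3 - x ^ 2 - 1 = 0)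
    (hy : y ^ 3 - y ^ 2 - 1 = 0) : x = y :=
  strictMonoOn_cube_sub_sq.injOn (one_lt_of_cube_sub_sq_sub_one_eq_zero hx).le
    (one_lt_of_cube_sub_sq_sub_one_eq_zero hy).le (by linarith)

theorem exists_cube_sub_sq_sub_one_eq_zero_mem_Ioo :
    ∃ x ∈ Set.Ioo (1.46 : ℝ) 1.47, x ^ 3 - x ^ 2 - 1 = 0 :=
  intermediate_value_Ioo (by norm_num) (by fun_prop) (by norm_num)

theorem div_lt_logb_of_pow_lt {b x : ℝ} {m n : ℕ} (hb : 1 < b) (hn : 0 < n)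
    (h : b ^ m < x ^ n) : (m / n : ℝ) < Real.logb b x := by
  have hlog := Real.log_lt_log (by positivity) h
  rw [Real.log_pow, Real.log_pow] at hlog
  rw [Real.logb, div_lt_div_iff₀ (by exact_mod_cast hn) (Real.log_pos hb)]
  linarith

theorem logb_lt_div_of_pow_lt {b x : ℝ} {m n : ℕ} (hb : 1 < b) (hx : 0 < x) (hn : 0 < n)
    (h : x ^ n < b ^ m) : Real.logb b x < m / n := by
  have hlog := Real.log_lt_log (by positivity) h
  rw [Real.log_pow, Real.log_pow] at hlog
  rw [Real.logb, div_lt_div_iff₀ (Real.log_pos hb) (by exact_mod_cast hn)]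
  linarith

open Polynomial in
/-- The adjacency matrix `A = [[1,1,0],[0,0,1],[1,0,0]]` of the error-generating state
diagram has characteristic polynomial `X³ − X² − 1`; this polynomial has exactly one
real root `λ`, which satisfies `1 < λ < 2`, and `log₂ λ` lies strictly between `0.54`
and `0.56`. -/
theorem charpoly_adjacency_and_root :
    (Matrix.charpoly (!![1, 1, 0; 0, 0, 1; 1, 0, 0] : Matrix (Fin 3) (Fin 3) ℝ)
        = X ^ 3 - X ^ 2 - 1) ∧
    ∃ lam : ℝ, (lam ^ 3 - lam ^ 2 - 1 = 0) ∧
      (∀ x : ℝ, x ^ 3 - x ^ 2 - 1 = 0 → x = lam) ∧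
      1 < lam ∧ lam < 2 ∧
      0.54 < Real.log lam / Real.log 2 ∧ Real.log lam / Real.log 2 < 0.56 := by
  obtain ⟨lam, ⟨hlo, hhi⟩, hroot⟩ := exists_cube_sub_sq_sub_one_eq_zero_mem_Ioo
  have hlower : ((27 : ℕ) / (50 : ℕ) : ℝ) < Real.logb 2 lam :=
    div_lt_logb_of_pow_lt one_lt_two (by norm_num)
      ((by norm_num : (2 : ℝ) ^ 27 < 1.46 ^ 50).trans
        (pow_lt_pow_left₀ hlo (by norm_num) (by norm_num)))
  have hupper : Real.logb 2 lam < ((28 : ℕ) / (50 : ℕ) : ℝ) :=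
    logb_lt_div_of_pow_lt one_lt_two (by linarith) (by norm_num)
      ((pow_lt_pow_left₀ hhi (by linarith) (by norm_num)).trans
        (by norm_num : (1.47 : ℝ) ^ 50 < 2 ^ 28))
  refine ⟨charpoly_errorStateMatrix ℝ, lam, hroot,
    fun x hx => eq_of_cube_sub_sq_sub_one_eq_zero hx hroot, by linarith, by linarith, ?_, ?_⟩
  · rw [Real.log_div_log]
    convert hlower using 1
    norm_num
  · rw [Real.log_div_log]
    convert hupper using 1
    norm_num
end

section
/- Let λ be the unique real root of the polynomial X³ − X² − 1 (the maximum eigenvalue of the adjacency matrix of the error-generating state diagram). Then the supremum over μ ∈ (0,1) of the entropy rate H₂(μ)/(3−2μ) equals log₂ λ, and this supremum is attained at some μ* ∈ (0,1). In particular the maximum entropy per bit achievable by the state diagram equals log₂(λ_max) of its adjacency matrix. -/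
/-- The binary entropy function in bits: `H₂(μ) = −μ·log₂ μ − (1−μ)·log₂(1−μ)`. -/
noncomputable def binH (μ : ℝ) : ℝ := -μ * Real.logb 2 μ - (1 - μ) * Real.logb 2 (1 - μ)

/-- Let `λ` be the unique real root of `X³ − X² − 1` (the maximum eigenvalue of the
adjacency matrix of the error-generating state diagram).  Then the supremum over
`μ ∈ (0,1)` of the entropy rate `H₂(μ)/(3−2μ)` equals `log₂ λ`, and it is attained at
some `μ* ∈ (0,1)`: `log₂ λ` is the greatest element of the image of `(0,1)` under
`μ ↦ H₂(μ)/(3−2μ)`. -/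
theorem max_entropy_rate_eq_log_max_eigenvalue (lam : ℝ)
    (hroot : lam ^ 3 - lam ^ 2 - 1 = 0)
    (huniq : ∀ x : ℝ, x ^ 3 - x ^ 2 - 1 = 0 → x = lam) :
    IsGreatest ((fun μ : ℝ => binH μ / (3 - 2 * μ)) '' Set.Ioo (0 : ℝ) 1)
      (Real.log lam / Real.log 2) := by
  have h2 : (0:ℝ) < Real.log 2 := Real.log_pos (by norm_num)
  have hlam1 : 1 < lam := by
    by_contra h
    push_neg at h
    nlinarith [sq_nonneg lam]
  have hlam0 : 0 < lam := by linarith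
  have hlamne : lam ≠ 0 := ne_of_gt hlam0
  set L := Real.log lam with hL
  have ha : (0:ℝ) < lam⁻¹ := inv_pos.mpr hlam0
  have ha1 : lam⁻¹ < 1 := by
    rw [inv_lt_one_iff₀]; right; exact hlam1
  have hab : lam⁻¹ + (lam^3)⁻¹ = 1 := by
    field_simp
    nlinarith [hroot]
  have hbpos : (0:ℝ) < (lam^3)⁻¹ := by positivity
  have hb : (1:ℝ) - lam⁻¹ = (lam^3)⁻¹ := by linarith
  constructor
  · -- membership: attained at μ = lam⁻¹
    refine ⟨lam⁻¹, ⟨ha, ha1⟩, ?_⟩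
    have hden : (0:ℝ) < 3 - 2 * lam⁻¹ := by linarith
    have hbinH : binH lam⁻¹ = (3 - 2 * lam⁻¹) * (L / Real.log 2) := by
      unfold binH
      rw [hb]
      rw [Real.logb, Real.logb, Real.log_inv, Real.log_inv, Real.log_pow]
      have hd : 3 - 2 * lam⁻¹ = lam⁻¹ + 3 * (lam^3)⁻¹ := by linarith
      rw [hd]
      push_cast
      ring
    simp only
    rw [hbinH, mul_comm, mul_div_assoc, div_self (ne_of_gt hden), mul_one]
  · -- upper bound
    rintro y ⟨μ, ⟨hμ0, hμ1⟩, rfl⟩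
    simp only
    have hμ1' : 0 < 1 - μ := by linarith
    have hden : 0 < 3 - 2*μ := by linarith
    have key : -μ * Real.log μ - (1-μ) * Real.log (1-μ) ≤ (3 - 2*μ) * L := by
      have h1 := Real.log_le_sub_one_of_pos (show (0:ℝ) < lam⁻¹ / μ by positivity)
      have h2' := Real.log_le_sub_one_of_pos
        (show (0:ℝ) < (lam^3)⁻¹ / (1-μ) by positivity)
      rw [Real.log_div (ne_of_gt ha) (ne_of_gt hμ0), Real.log_inv] at h1
      rw [Real.log_div (ne_of_gt hbpos) (ne_of_gt hμ1'), Real.log_inv,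
        Real.log_pow] at h2'
      push_cast at h2'
      -- h1 : -L - log μ ≤ lam⁻¹/μ - 1
      -- h2' : -(3*L) - log (1-μ) ≤ (lam^3)⁻¹/(1-μ) - 1
      have e1 : μ * (-L - Real.log μ) ≤ lam⁻¹ - μ := by
        calc μ * (-L - Real.log μ) ≤ μ * (lam⁻¹/μ - 1) :=
              mul_le_mul_of_nonneg_left h1 hμ0.le
          _ = lam⁻¹ - μ := by field_simp
      have e2 : (1-μ) * (-(3*L) - Real.log (1-μ)) ≤ (lam^3)⁻¹ - (1-μ) := by
        calc (1-μ) * (-(3*L) - Real.log (1-μ))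
              ≤ (1-μ) * ((lam^3)⁻¹/(1-μ) - 1) :=
                mul_le_mul_of_nonneg_left h2' hμ1'.le
          _ = (lam^3)⁻¹ - (1-μ) := by field_simp
      nlinarith [e1, e2]
    have hbinH : binH μ * Real.log 2 = -μ * Real.log μ - (1-μ) * Real.log (1-μ) := by
      unfold binH
      rw [Real.logb, Real.logb]
      field_simp
    rw [div_le_div_iff₀ hden h2]
    nlinarith [key, hbinH]
end

section
/- Let d : Fin k → ZMod 2 be a data vector and let c be its encoding by a concatenation of k repetition codes of length 3: c(3j) = c(3j+1) = c(3j+2) = d j for each j. Let e be a binary error sequence of length 3k satisfying the spacing constraint that every one is followed by at least two zeros (for all i, e i = 1 implies e (i+1) = 0 and e (i+2) = 0 whenever those indices are in range), and let y = c + e be the received vector. Then for every j, at least two of the three values y(3j), y(3j+1), y(3j+2) equal d j; consequently majority decoding of each length-3 block recovers d exactly, i.e., all errors are corrected. -/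
/-!
Under the spacing constraint a one in the error sequence is followed by two zeros, so any
window of three consecutive positions carries at most one error. Hence in every block at least
two received bits equal the data bit, and the majority vote returns it.
-/

/-- Majority vote of three bits over the binary field: `maj a b c = ab + bc + ca`,
which equals the bit occurring at least twice among `a, b, c`. -/
def maj (a b c : ZMod 2) : ZMod 2 := a * b + b * c + a * c

def TwoOfThree {ι : Type*} (p : ι → Prop) (a b c : ι) : Prop :=
  p a ∧ p b ∨ p a ∧ p c ∨ p b ∧ p c

namespace TwoOfThree

variable {ι : Type*} {p q : ι → Prop} {a b c : ι}

theorem imp (h : TwoOfThree p a b c) (ha : p a → q a) (hb : p b → q b) (hc : p c → q c) :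
    TwoOfThree q a b c := by
  rcases h with ⟨hpa, hpb⟩ | ⟨hpa, hpc⟩ | ⟨hpb, hpc⟩
  exacts [.inl ⟨ha hpa, hb hpb⟩, .inr (.inl ⟨ha hpa, hc hpc⟩), .inr (.inr ⟨hb hpb, hc hpc⟩)]

theorem two_le_card_filter [DecidableEq ι] [DecidablePred p] (h : TwoOfThree p a b c)
    (hab : a ≠ b) (hac : a ≠ c) (hbc : b ≠ c) :
    2 ≤ (({a, b, c} : Finset ι).filter p).card := by
  refine Finset.one_lt_card.2 ?_
  rcases h with ⟨hpa, hpb⟩ | ⟨hpa, hpc⟩ | ⟨hpb, hpc⟩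
  · exact ⟨a, by simp [hpa], b, by simp [hpb], hab⟩
  · exact ⟨a, by simp [hpa], c, by simp [hpc], hac⟩
  · exact ⟨b, by simp [hpb], c, by simp [hpc], hbc⟩

theorem maj_eq {f : ι → ZMod 2} {x : ZMod 2} (h : TwoOfThree (fun i => f i = x) a b c) :
    maj (f a) (f b) (f c) = x := by
  have maj_self : ∀ x z : ZMod 2, maj x x z = x ∧ maj x z x = x ∧ maj z x x = x := by decide
  rcases h with ⟨ha, hb⟩ | ⟨ha, hc⟩ | ⟨hb, hc⟩
  · rw [ha, hb]; exact (maj_self x _).1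
  · rw [ha, hc]; exact (maj_self x _).2.1
  · rw [hb, hc]; exact (maj_self x _).2.2

end TwoOfThree

theorem twoOfThree_eq_zero_of_spaced {n i : ℕ} {e : ℕ → ZMod 2}
    (he : ∀ i : ℕ, e i = 1 → (i + 1 < n → e (i + 1) = 0) ∧ (i + 2 < n → e (i + 2) = 0))
    (hi : i + 2 < n) :
    TwoOfThree (fun m => e m = 0) i (i + 1) (i + 2) := by
  have zero_or_one : ∀ x : ZMod 2, x = 0 ∨ x = 1 := by decide
  rcases zero_or_one (e i) with h₀ | h₀
  · rcases zero_or_one (e (i + 1)) with h₁ | h₁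
    · exact .inl ⟨h₀, h₁⟩
    · exact .inr (.inl ⟨h₀, (he _ h₁).1 (by omega)⟩)
  · exact .inr (.inr ⟨(he _ h₀).1 (by omega), (he _ h₀).2 hi⟩)

/-- Let `d : Fin k → ZMod 2` be a data vector, `c` its encoding by a concatenation of
`k` repetition codes of length 3 (`c (3j) = c (3j+1) = c (3j+2) = d j`), `e` an error
sequence of length `3k` satisfying the spacing constraint (every one is followed by at
least two zeros, as long as the indices are in range), and `y = c + e` the received
vector.  Then for every `j`, at least two of the three values `y (3j), y (3j+1),
y (3j+2)` equal `d j`, and majority decoding of each length-3 block recovers `d`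
exactly: all errors are corrected. -/
theorem repetition_code_corrects_spaced_errors (k : ℕ) (d : Fin k → ZMod 2)
    (c e y : ℕ → ZMod 2)
    (hc : ∀ j : Fin k, c (3 * j) = d j ∧ c (3 * j + 1) = d j ∧ c (3 * j + 2) = d j)
    (he : ∀ i : ℕ, e i = 1 →
      (i + 1 < 3 * k → e (i + 1) = 0) ∧ (i + 2 < 3 * k → e (i + 2) = 0))
    (hy : ∀ i : ℕ, i < 3 * k → y i = c i + e i) :
    ∀ j : Fin k,
      2 ≤ ((({3 * (j : ℕ), 3 * (j : ℕ) + 1, 3 * (j : ℕ) + 2} : Finset ℕ)).filter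
            (fun i => y i = d j)).card ∧
      maj (y (3 * j)) (y (3 * j + 1)) (y (3 * j + 2)) = d j := by
  intro j
  obtain ⟨hc₀, hc₁, hc₂⟩ := hc j
  have hj : (j : ℕ) < k := j.2
  have correct {m : ℕ} (hm : m < 3 * k) (hcm : c m = d j) (hem : e m = 0) : y m = d j := by
    rw [hy m hm, hcm, hem, add_zero]
  have hblock : TwoOfThree (fun m => y m = d j) (3 * j) (3 * j + 1) (3 * j + 2) :=
    (twoOfThree_eq_zero_of_spaced he (by omega)).imp (correct (by omega) hc₀)
      (correct (by omega) hc₁) (correct (by omega) hc₂)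
  exact ⟨hblock.two_le_card_filter (by omega) (by omega) (by omega), hblock.maj_eq⟩
end
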